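/- Suppose moreover that μ in the previous setting has a smooth strictly positive density on 𝕋^d. Then the matrix D with entries D_{ij} = ∫_{𝕋^d}(δ_{ik}+∂_k g_i)(δ_{kj}+∂_k g_j) dμ is positive definite: ξᵀDξ = 0 implies ξ = 0. (The key point: if ξ + ∇(ξ·g) = 0 μ-a.e., then ξ·x + ξ·g(x) is constant, contradicting periodicity of g unless ξ = 0.) -/

import Mathlib

open MeasureTheory Matrix

section Aux

variable {d : ℕ}

/-- periodicity of the derivative of a periodic function -/
lemma aux_fderiv_periodic (φ : (Fin d → ℝ) → ℝ) (hφ : Differentiable ℝ φ)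
    (c : Fin d → ℝ) (hc : ∀ y, φ (y + c) = φ y) (x : Fin d → ℝ) :
    fderiv ℝ φ (x + c) = fderiv ℝ φ x := by
  have h1 : HasFDerivAt (fun y : Fin d → ℝ => y + c)
      (ContinuousLinearMap.id ℝ (Fin d → ℝ)) x := (hasFDerivAt_id x).add_const c
  have h2 : HasFDerivAt φ (fderiv ℝ φ (x + c)) (x + c) := (hφ (x + c)).hasFDerivAt
  have h3 : HasFDerivAt (φ ∘ fun y => y + c)
      ((fderiv ℝ φ (x + c)).comp (ContinuousLinearMap.id ℝ (Fin d → ℝ))) x := h2.comp x h1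
  have h4 : (φ ∘ fun y => y + c) = φ := funext fun y => hc y
  rw [h4] at h3
  rw [h3.fderiv, ContinuousLinearMap.comp_id]

end Aux

/-- if moreover `μ` has a smooth strictly positive density `ρ` on
the torus (realised as the unit cell `[0,1)^d` with a `ℤ^d`-periodic density),
then `D` is positive definite: `ξᵀ D ξ = 0` implies `ξ = 0`. -/
theorem stmt_8 (d : ℕ) (g : (Fin d → ℝ) → (Fin d → ℝ))
    (hg : ContDiff ℝ (⊤ : ℕ∞) g)
    (hper : ∀ (x : Fin d → ℝ) (m : Fin d → ℤ), g (x + fun i => (m i : ℝ)) = g x)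
    (ρ : (Fin d → ℝ) → ℝ) (hρ : ContDiff ℝ (⊤ : ℕ∞) ρ) (hρpos : ∀ x, 0 < ρ x)
    (hρper : ∀ (x : Fin d → ℝ) (m : Fin d → ℤ), ρ (x + fun i => (m i : ℝ)) = ρ x)
    (μ : Measure (Fin d → ℝ))
    (hμ : μ = (volume.restrict (Set.univ.pi fun _ : Fin d => Set.Ico (0:ℝ) 1)).withDensity
      (fun x => ENNReal.ofReal (ρ x)))
    [IsProbabilityMeasure μ]
    (D : Matrix (Fin d) (Fin d) ℝ)
    (hD : ∀ i j, D i j = ∫ x, ∑ k : Fin d,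
      ((if i = k then (1:ℝ) else 0) + fderiv ℝ (fun y => g y i) x (Pi.single k 1)) *
      ((if k = j then (1:ℝ) else 0) + fderiv ℝ (fun y => g y j) x (Pi.single k 1)) ∂μ) :
    ∀ ξ : Fin d → ℝ, ξ ⬝ᵥ D.mulVec ξ = 0 → ξ = 0 := by
  intro ξ hξ
  -- basic objects
  set cell : Set (Fin d → ℝ) := Set.univ.pi fun _ : Fin d => Set.Ico (0:ℝ) 1 with hcell
  have hcellmeas : MeasurableSet cell :=
    MeasurableSet.univ_pi fun _ => measurableSet_Ico
  have hgi : ∀ i, ContDiff ℝ (⊤ : ℕ∞) fun y => g y i := fun i => contDiff_pi.mp hg i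
  have hgid : ∀ i, Differentiable ℝ fun y => g y i := fun i => (hgi i).differentiable (by simp)
  -- partial derivatives
  set pd : Fin d → Fin d → (Fin d → ℝ) → ℝ :=
    fun i k x => fderiv ℝ (fun y => g y i) x (Pi.single k 1) with hpd
  have hpdcont : ∀ i k, Continuous (pd i k) := fun i k =>
    ((hgi i).continuous_fderiv (by simp)).clm_apply continuous_const
  have hpdper : ∀ i k (x : Fin d → ℝ) (m : Fin d → ℤ), pd i k (x + fun l => (m l : ℝ)) = pd i k x := by
    intro i k x m
    have := aux_fderiv_periodic (fun y => g y i) (hgid i) (fun l => (m l : ℝ))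
      (fun y => by rw [hper]) x
    simp only [hpd, this]
  -- the quadratic form integrand
  set A : Fin d → (Fin d → ℝ) → ℝ :=
    fun k x => ∑ i, ξ i * ((if i = k then (1:ℝ) else 0) + pd i k x) with hA
  have hAcont : ∀ k, Continuous (A k) := by
    intro k
    exact continuous_finset_sum _ fun i _ => continuous_const.mul (continuous_const.add (hpdcont i k))
  set h : (Fin d → ℝ) → ℝ := fun x => ∑ k, (A k x) ^ 2 with hh
  have hhcont : Continuous h := continuous_finset_sum _ fun k _ => (hAcont k).pow 2
  -- a.e. membership in the cell
  have haecell : ∀ᵐ x ∂μ, x ∈ cell := by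
    rw [ae_iff]
    have : {x | ¬ x ∈ cell} = cellᶜ := rfl
    rw [this, hμ, MeasureTheory.withDensity_apply _ hcellmeas.compl,
      MeasureTheory.Measure.restrict_restrict hcellmeas.compl]
    simp
  -- integrability of continuous functions w.r.t. μ
  have hint : ∀ φ : (Fin d → ℝ) → ℝ, Continuous φ → Integrable φ μ := by
    intro φ hφ
    obtain ⟨C, hC⟩ := (isCompact_univ_pi fun _ : Fin d => isCompact_Icc).exists_bound_of_continuousOn
      (s := Set.univ.pi fun _ : Fin d => Set.Icc (0:ℝ) 1) hφ.continuousOn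
    refine Integrable.mono' (integrable_const C) hφ.aestronglyMeasurable ?_
    filter_upwards [haecell] with x hx
    exact hC x fun i _ => ⟨(hx i trivial).1, le_of_lt (hx i trivial).2⟩
  -- the key identity
  set B : Fin d → Fin d → (Fin d → ℝ) → ℝ :=
    fun i k x => (if i = k then (1:ℝ) else 0) + pd i k x with hB
  have hBcont : ∀ i k, Continuous (B i k) := fun i k => continuous_const.add (hpdcont i k)
  have hD' : ∀ i j, D i j = ∫ x, ∑ k, B i k x * B j k x ∂μ := by
    intro i j
    rw [hD i j]
    refine integral_congr_ae (Filter.Eventually.of_forall fun x => ?_)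
    refine Finset.sum_congr rfl fun k _ => ?_
    rw [hB]
    congr 1
    simp only [hpd]
    congr 1
    exact if_congr eq_comm rfl rfl
  have hAeq : ∀ k x, A k x = ∑ i, ξ i * B i k x := fun k x => rfl
  have key : ξ ⬝ᵥ D.mulVec ξ = ∫ x, h x ∂μ := by
    have hIntTerm : ∀ i j, Integrable (fun x => ξ i * ξ j * ∑ k, B i k x * B j k x) μ :=
      fun i j => hint _ (continuous_const.mul
        (continuous_finset_sum _ fun k _ => (hBcont i k).mul (hBcont j k)))
    have e1 : ξ ⬝ᵥ D.mulVec ξ = ∑ i, ∑ j, ξ i * ξ j * D i j := by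
      simp only [dotProduct, Matrix.mulVec, Finset.mul_sum]
      exact Finset.sum_congr rfl fun i _ => Finset.sum_congr rfl fun j _ => by ring
    have e4 : ∀ x, (∑ i, ∑ j, ξ i * ξ j * ∑ k, B i k x * B j k x) = h x := by
      intro x
      calc (∑ i, ∑ j, ξ i * ξ j * ∑ k, B i k x * B j k x)
          = ∑ i, ∑ j, ∑ k, ξ i * ξ j * (B i k x * B j k x) := by
            simp only [Finset.mul_sum]
        _ = ∑ i, ∑ k, ∑ j, ξ i * ξ j * (B i k x * B j k x) :=
            Finset.sum_congr rfl fun i _ => Finset.sum_comm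
        _ = ∑ k, ∑ i, ∑ j, ξ i * ξ j * (B i k x * B j k x) := Finset.sum_comm
        _ = h x := by
            rw [hh]
            refine Finset.sum_congr rfl fun k _ => ?_
            rw [sq, hAeq k x, Finset.sum_mul_sum]
            exact Finset.sum_congr rfl fun i _ => Finset.sum_congr rfl fun j _ => by ring
    calc ξ ⬝ᵥ D.mulVec ξ = ∑ i, ∑ j, ξ i * ξ j * D i j := e1
      _ = ∑ i, ∑ j, ∫ x, ξ i * ξ j * ∑ k, B i k x * B j k x ∂μ :=
          Finset.sum_congr rfl fun i _ => Finset.sum_congr rfl fun j _ => by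
            rw [hD' i j, MeasureTheory.integral_const_mul]
      _ = ∑ i, ∫ x, ∑ j, ξ i * ξ j * ∑ k, B i k x * B j k x ∂μ :=
          Finset.sum_congr rfl fun i _ =>
            (MeasureTheory.integral_finset_sum _ fun j _ => hIntTerm i j).symm
      _ = ∫ x, ∑ i, ∑ j, ξ i * ξ j * ∑ k, B i k x * B j k x ∂μ :=
          (MeasureTheory.integral_finset_sum _ fun i _ => hint _
            (continuous_finset_sum _ fun j _ => continuous_const.mul
              (continuous_finset_sum _ fun k _ => (hBcont i k).mul (hBcont j k)))).symm
      _ = ∫ x, h x ∂μ := integral_congr_ae (Filter.Eventually.of_forall fun x => e4 x)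
  have hint0 : ∫ x, h x ∂μ = 0 := by rw [← key, hξ]
  have haezero : h =ᵐ[μ] 0 := by
    refine (MeasureTheory.integral_eq_zero_iff_of_nonneg ?_ (hint h hhcont)).mp hint0
    intro x
    exact Finset.sum_nonneg fun k _ => sq_nonneg _
  -- upgrade to everywhere zero
  have hzero : ∀ x, h x = 0 := by
    set S : Set (Fin d → ℝ) := {x | h x ≠ 0} with hS
    have hSopen : IsOpen S := by
      have : S = h ⁻¹' {(0:ℝ)}ᶜ := by
        ext y; simp [hS]
      rw [this]
      exact isOpen_compl_singleton.preimage hhcont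
    have hSmeas : MeasurableSet S := hSopen.measurableSet
    have hμS : μ S = 0 := by
      have h1 := haezero
      rw [Filter.EventuallyEq, ae_iff] at h1
      simpa [hS] using h1
    have hvol : volume (S ∩ cell) = 0 := by
      rw [hμ, MeasureTheory.withDensity_apply _ hSmeas,
        MeasureTheory.Measure.restrict_restrict hSmeas] at hμS
      have h2 := (MeasureTheory.setLIntegral_eq_zero_iff (hSmeas.inter hcellmeas)
        ((ENNReal.continuous_ofReal.comp hρ.continuous).measurable)).mp hμS
      have h3 : ∀ᵐ x ∂(volume : Measure (Fin d → ℝ)), x ∉ S ∩ cell := by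
        filter_upwards [h2] with x hx hmem
        exact absurd (hx hmem) (ne_of_gt (ENNReal.ofReal_pos.mpr (hρpos x)))
      rw [ae_iff] at h3
      simpa using h3
    set box : Set (Fin d → ℝ) := Set.univ.pi fun _ : Fin d => Set.Ioo (0:ℝ) 1 with hbox
    have hboxsub : box ⊆ cell := by
      intro y hy i _
      exact ⟨le_of_lt (hy i trivial).1, (hy i trivial).2⟩
    have hempty : S ∩ box = ∅ := by
      have hvb : volume (S ∩ box) = 0 :=
        le_antisymm (le_trans (measure_mono (Set.inter_subset_inter_right S hboxsub)) hvol.le)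
          (zero_le)
      exact (hSopen.inter (isOpen_set_pi Set.finite_univ fun i _ => isOpen_Ioo)).eq_empty_of_measure_zero hvb
    have hClosed : ∀ x ∈ Set.univ.pi fun _ : Fin d => Set.Icc (0:ℝ) 1, h x = 0 := by
      have hsub : (Set.univ.pi fun _ : Fin d => Set.Icc (0:ℝ) 1) ⊆ closure box := by
        rw [hbox, closure_pi_set]
        intro y hy i _
        rw [closure_Ioo (by norm_num : (0:ℝ) ≠ 1)]
        exact hy i trivial
      intro x hx
      have hcl : closure box ⊆ {y | h y = 0} := by
        refine closure_minimal ?_ (isClosed_eq hhcont continuous_const)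
        intro y hy
        by_contra hne
        have : y ∈ S ∩ box := ⟨hne, hy⟩
        rw [hempty] at this
        exact this
      exact hcl (hsub hx)
    intro x
    have hxdecomp : x = (fun i => Int.fract (x i)) + fun i => ((⌊x i⌋ : ℤ) : ℝ) := by
      funext i
      rw [Pi.add_apply]
      exact (Int.fract_add_floor (x i)).symm
    have hhper : h ((fun i => Int.fract (x i)) + fun i => ((⌊x i⌋:ℤ):ℝ))
        = h (fun i => Int.fract (x i)) := by
      rw [hh]
      refine Finset.sum_congr rfl fun k _ => ?_
      congr 1
      rw [hA]
      exact Finset.sum_congr rfl fun i _ => by rw [hpdper i k _ (fun l => ⌊x l⌋)]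
    rw [hxdecomp, hhper]
    refine hClosed _ fun i _ => ⟨Int.fract_nonneg (x i), le_of_lt (Int.fract_lt_one (x i))⟩
  -- hence each A k vanishes identically
  have hAzero : ∀ k x, A k x = 0 := by
    intro k x
    have := hzero x
    rw [hh] at this
    have h2 := (Finset.sum_eq_zero_iff_of_nonneg (fun k _ => sq_nonneg (A k x))).mp this k
      (Finset.mem_univ k)
    exact pow_eq_zero_iff two_ne_zero |>.mp h2
  -- the function f is constant
  set f : (Fin d → ℝ) → ℝ := fun x => ∑ i, ξ i * (x i + g x i) with hf
  have hfderiv : ∀ x, HasFDerivAt f (0 : (Fin d → ℝ) →L[ℝ] ℝ) x := by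
    intro x
    set M : (Fin d → ℝ) →L[ℝ] ℝ :=
      ∑ i, ξ i • ((ContinuousLinearMap.proj i : (Fin d → ℝ) →L[ℝ] ℝ)
        + fderiv ℝ (fun y => g y i) x) with hM
    have hMd : HasFDerivAt f M x := by
      rw [hf, hM]
      exact HasFDerivAt.fun_sum fun i _ =>
        (((ContinuousLinearMap.proj i : (Fin d → ℝ) →L[ℝ] ℝ).hasFDerivAt).add
          ((hgid i x).hasFDerivAt)).const_mul (ξ i)
    have hMbasis : ∀ k, M (Pi.single k 1) = 0 := by
      intro k
      have : M (Pi.single k 1) = A k x := by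
        rw [hM, hA]
        simp only [ContinuousLinearMap.sum_apply, ContinuousLinearMap.smul_apply,
          ContinuousLinearMap.add_apply, ContinuousLinearMap.proj_apply, smul_eq_mul,
          Pi.single_apply, hpd]
      rw [this, hAzero k x]
    have hM0 : M = 0 := by
      apply ContinuousLinearMap.ext
      intro v
      have hv : v = ∑ k, v k • (Pi.single k 1 : Fin d → ℝ) := by
        funext l
        simp [Finset.sum_apply, Pi.single_apply, Finset.sum_ite_eq]
      rw [hv, map_sum]
      simp only [_root_.map_smul, hMbasis, smul_zero, Finset.sum_const_zero,
        ContinuousLinearMap.zero_apply]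
    rw [← hM0]
    exact hMd
  have hconst : ∀ x y, f x = f y :=
    is_const_of_fderiv_eq_zero (fun x => (hfderiv x).differentiableAt)
      (fun x => (hfderiv x).fderiv) 
  -- conclude
  funext j
  have hgper : g (Pi.single j (1:ℝ)) = g 0 := by
    have := hper 0 (Pi.single j (1:ℤ))
    have e : (fun i => (((Pi.single j (1:ℤ) : Fin d → ℤ) i : ℤ) : ℝ)) = Pi.single j (1:ℝ) := by
      funext i
      simp [Pi.single_apply]
    rw [e, zero_add] at this
    exact this
  have h1 : f (Pi.single j (1:ℝ)) = ξ j + ∑ i, ξ i * g 0 i := by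
    rw [hf]
    simp only [hgper]
    rw [show ∀ (s : Fin d → ℝ), (∑ i, ξ i * (s i + g 0 i)) = (∑ i, ξ i * s i) + ∑ i, ξ i * g 0 i from
      fun s => by rw [← Finset.sum_add_distrib]; exact Finset.sum_congr rfl fun i _ => by ring]
    congr 1
    simp [Pi.single_apply, mul_ite, Finset.sum_ite_eq']
  have h2 : f 0 = ∑ i, ξ i * g 0 i := by
    simp [hf]
  have := hconst (Pi.single j (1:ℝ)) 0
  rw [h1, h2] at this
  have : ξ j = 0 := by linarith
  simpa using this
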